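/- arXiv:1807.04965 — 4 statements merged into one kernel-verified Lean document; each statement's English description precedes it below -/
import Mathlib

section
/- A function f : (k+1)^V → ℝ is k-submodular if and only if it is both pairwise monotone and orthant submodular. -/
def ksup {k : ℕ} (i i' : Fin (k+1)) : Fin (k+1) :=
  if i = 0 ∨ i' = 0 ∨ i = i' then max i i' else 0

def kinf {k : ℕ} (i i' : Fin (k+1)) : Fin (k+1) :=
  if i = 0 ∨ i' = 0 ∨ i = i' then min i i' else 0

def vsup {k : ℕ} {V : Type*} (x y : V → Fin (k+1)) : V → Fin (k+1) :=
  fun j => ksup (x j) (y j)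

def vinf {k : ℕ} {V : Type*} (x y : V → Fin (k+1)) : V → Fin (k+1) :=
  fun j => kinf (x j) (y j)

/-- The partial order `x ≤ y ↔ x ⊓ y = x`. -/
def kle {k : ℕ} {V : Type*} (x y : V → Fin (k+1)) : Prop :=
  vinf x y = x

/-- `f` is `k`-submodular. -/
def KSubmodular {k : ℕ} {V : Type*} (f : (V → Fin (k+1)) → ℝ) : Prop :=
  ∀ x y, f (vsup x y) + f (vinf x y) ≤ f x + f y

/-- The marginal gain `Δ_{j,i} f(x) = f(x + i e_j) − f(x)`. -/
def marginal {k : ℕ} {V : Type*} [DecidableEq V]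
    (f : (V → Fin (k+1)) → ℝ) (j : V) (i : Fin (k+1)) (x : V → Fin (k+1)) : ℝ :=
  f (Function.update x j i) - f x

/-- Pairwise monotonicity. -/
def PairwiseMonotone {k : ℕ} {V : Type*} [DecidableEq V]
    (f : (V → Fin (k+1)) → ℝ) : Prop :=
  ∀ (x : V → Fin (k+1)) (j : V) (i i' : Fin (k+1)),
    x j = 0 → i ≠ 0 → i' ≠ 0 → i ≠ i' →
      0 ≤ marginal f j i x + marginal f j i' x

/-- Orthant submodularity. -/
def OrthantSubmodular {k : ℕ} {V : Type*} [DecidableEq V]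
    (f : (V → Fin (k+1)) → ℝ) : Prop :=
  ∀ (x y : V → Fin (k+1)) (j : V) (i : Fin (k+1)),
    i ≠ 0 → kle x y → y j = 0 →
      marginal f j i y ≤ marginal f j i x

/-!
Necessity: both conditions are instances of `k`-submodularity, for the pair `x + i e_j`,
`x + i' e_j` (whose join and meet are both `x`) and for the pair `x + i e_j`, `y` (join
`y + i e_j`, meet `x`).

Sufficiency: let `D` be the set of coordinates where `x` and `y` carry different nonzero labels,
and let `x'`, `y'` be `x`, `y` with the coordinates in `D` cleared. They have the same join and
meet as `x`, `y` and no conflicts, so `y'` arises from `x' ⊓ y'`, and `x' ⊔ y'` from `x'`, by the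
same increments on the coordinates where `x'` vanishes; orthant submodularity, one coordinate at a
time, gives `f (x ⊔ y) + f (x ⊓ y) ≤ f x' + f y'`. The labels on `D` are then restored one
coordinate at a time: orthant submodularity bounds both increments below by the increments at a
common upper bound vanishing at that coordinate, where pairwise monotonicity makes their sum
nonnegative. Hence `f x' + f y' ≤ f x + f y`.
-/

section Lattice

variable {k : ℕ}

@[simp] lemma ksup_self (i : Fin (k+1)) : ksup i i = i := by simp [ksup]

@[simp] lemma kinf_self (i : Fin (k+1)) : kinf i i = i := by simp [kinf]

@[simp] lemma ksup_zero_left (i : Fin (k+1)) : ksup 0 i = i := by simp [ksup]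

@[simp] lemma ksup_zero_right (i : Fin (k+1)) : ksup i 0 = i := by simp [ksup]

@[simp] lemma kinf_zero_left (i : Fin (k+1)) : kinf 0 i = 0 := by simp [kinf]

@[simp] lemma kinf_zero_right (i : Fin (k+1)) : kinf i 0 = 0 := by simp [kinf]

lemma ksup_of_ne {i i' : Fin (k+1)} (hi : i ≠ 0) (hi' : i' ≠ 0) (h : i ≠ i') :
    ksup i i' = 0 := by simp [ksup, hi, hi', h]

lemma kinf_of_ne {i i' : Fin (k+1)} (hi : i ≠ 0) (hi' : i' ≠ 0) (h : i ≠ i') :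
    kinf i i' = 0 := by simp [kinf, hi, hi', h]

lemma kinf_eq_left_iff {i i' : Fin (k+1)} : kinf i i' = i ↔ i = 0 ∨ i = i' := by
  by_cases hi : i = 0
  · simp [hi]
  by_cases hi' : i' = 0
  · simp [hi, hi', eq_comm]
  by_cases h : i = i'
  · simp [h]
  simp [kinf_of_ne hi hi' h, hi, h, eq_comm]

variable {V : Type*}

lemma kle_iff_forall {x y : V → Fin (k+1)} : kle x y ↔ ∀ j, x j = 0 ∨ x j = y j := by
  simp only [kle, funext_iff, vinf, kinf_eq_left_iff]

lemma eq_zero_of_kle {x y : V → Fin (k+1)} (h : kle x y) {j : V} (hy : y j = 0) : x j = 0 := by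
  simpa [hy] using kle_iff_forall.mp h j

lemma vsup_of_kle {x y : V → Fin (k+1)} (h : kle x y) : vsup x y = y := by
  funext j
  rcases kle_iff_forall.mp h j with hx | hx <;> simp [vsup, hx]

@[simp] lemma vsup_self (x : V → Fin (k+1)) : vsup x x = x := by
  funext j; simp [vsup]

@[simp] lemma vinf_self (x : V → Fin (k+1)) : vinf x x = x := by
  funext j; simp [vinf]

lemma vinf_kle_left (x y : V → Fin (k+1)) : kle (vinf x y) x := by
  refine kle_iff_forall.mpr fun t => ?_
  by_cases hx : x t = 0
  · simp [vinf, hx]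
  by_cases hy : y t = 0
  · simp [vinf, hy]
  by_cases hxy : x t = y t
  · simp [vinf, hxy]
  · simp [vinf, kinf_of_ne hx hy hxy]

lemma kle_vsup_left {x y : V → Fin (k+1)} (h : ∀ t, x t = 0 ∨ y t = 0 ∨ x t = y t) :
    kle x (vsup x y) :=
  kle_iff_forall.mpr fun t => by rcases h t with h | h | h <;> simp [vsup, h]

lemma kle_vsup_right {x y : V → Fin (k+1)} (h : ∀ t, x t = 0 ∨ y t = 0 ∨ x t = y t) :
    kle y (vsup x y) :=
  kle_iff_forall.mpr fun t => by rcases h t with h | h | h <;> simp [vsup, h]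

variable [DecidableEq V]

lemma vsup_update_update (x y : V → Fin (k+1)) (j : V) (i i' : Fin (k+1)) :
    vsup (Function.update x j i) (Function.update y j i') =
      Function.update (vsup x y) j (ksup i i') := by
  funext t; exact Function.apply_update₂ (fun _ => ksup) x y j i i' t

lemma vinf_update_update (x y : V → Fin (k+1)) (j : V) (i i' : Fin (k+1)) :
    vinf (Function.update x j i) (Function.update y j i') =
      Function.update (vinf x y) j (kinf i i') := by
  funext t; exact Function.apply_update₂ (fun _ => kinf) x y j i i' t

lemma kle_piecewise {x y : V → Fin (k+1)} (h : kle x y) (S : Finset V) (u : V → Fin (k+1)) :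
    kle (S.piecewise u x) (S.piecewise u y) := by
  rw [kle_iff_forall] at h ⊢
  intro t
  by_cases ht : t ∈ S <;> simp [ht, h t]

lemma vsup_piecewise_zero {x y : V → Fin (k+1)} {D : Finset V}
    (hD : ∀ t ∈ D, x t ≠ 0 ∧ y t ≠ 0 ∧ x t ≠ y t) :
    vsup (D.piecewise 0 x) (D.piecewise 0 y) = vsup x y := by
  funext t
  by_cases ht : t ∈ D
  · obtain ⟨hx, hy, hxy⟩ := hD t ht
    simp [vsup, ht, ksup_of_ne hx hy hxy]
  · simp [vsup, ht]

lemma vinf_piecewise_zero {x y : V → Fin (k+1)} {D : Finset V}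
    (hD : ∀ t ∈ D, x t ≠ 0 ∧ y t ≠ 0 ∧ x t ≠ y t) :
    vinf (D.piecewise 0 x) (D.piecewise 0 y) = vinf x y := by
  funext t
  by_cases ht : t ∈ D
  · obtain ⟨hx, hy, hxy⟩ := hD t ht
    simp [vinf, ht, kinf_of_ne hx hy hxy]
  · simp [vinf, ht]

end Lattice

section Necessity

variable {k : ℕ} {V : Type*} [DecidableEq V] {f : (V → Fin (k+1)) → ℝ}

lemma KSubmodular.pairwiseMonotone (h : KSubmodular f) : PairwiseMonotone f := by
  intro x j i i' hx hi hi' hii'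
  have := h (Function.update x j i) (Function.update x j i')
  rw [vsup_update_update, vinf_update_update, ksup_of_ne hi hi' hii', kinf_of_ne hi hi' hii',
    vsup_self, vinf_self, ← hx, Function.update_eq_self] at this
  unfold marginal
  linarith

lemma KSubmodular.orthantSubmodular (h : KSubmodular f) : OrthantSubmodular f := by
  intro x y j i _ hxy hy
  have hx : Function.update x j 0 = x := by rw [← eq_zero_of_kle hxy hy, Function.update_eq_self]
  have hy' : Function.update y j 0 = y := by rw [← hy, Function.update_eq_self]
  have := h (Function.update x j i) (Function.update y j 0)
  rw [vsup_update_update, vinf_update_update, ksup_zero_right, kinf_zero_right,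
    vsup_of_kle hxy, hxy, hx, hy'] at this
  unfold marginal
  linarith

end Necessity

section Sufficiency

variable {k : ℕ} {V : Type*} [DecidableEq V] {f : (V → Fin (k+1)) → ℝ}

lemma OrthantSubmodular.marginal_le (h : OrthantSubmodular f) {x y : V → Fin (k+1)}
    (hxy : kle x y) {j : V} (hy : y j = 0) (i : Fin (k+1)) :
    marginal f j i y ≤ marginal f j i x := by
  by_cases hi : i = 0
  · have hx : Function.update x j 0 = x := by simp [eq_zero_of_kle hxy hy]
    have hy' : Function.update y j 0 = y := by simp [hy]
    simp [marginal, hi, hx, hy']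
  · exact h x y j i hi hxy hy

lemma OrthantSubmodular.piecewise_add_le (h : OrthantSubmodular f) {z w : V → Fin (k+1)}
    (hzw : kle z w) (S : Finset V) (hw : ∀ j ∈ S, w j = 0) (u : V → Fin (k+1)) :
    f (S.piecewise u w) + f z ≤ f (S.piecewise u z) + f w := by
  induction S using Finset.induction_on with
  | empty => simp [add_comm]
  | insert j S hj ih =>
    have hwS : S.piecewise u w j = 0 := by
      rw [Finset.piecewise_eq_of_notMem _ _ _ hj]; exact hw j (Finset.mem_insert_self j S)
    have hstep := h.marginal_le (kle_piecewise hzw S u) hwS (u j)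
    have := ih fun t ht => hw t (Finset.mem_insert_of_mem ht)
    rw [Finset.piecewise_insert, Finset.piecewise_insert]
    unfold marginal at hstep
    linarith

lemma PairwiseMonotone.add_le_piecewise_add_piecewise_of_kle (hPM : PairwiseMonotone f)
    (hOS : OrthantSubmodular f) {a b : V → Fin (k+1)} (hab : kle a b) (S : Finset V)
    (hb : ∀ j ∈ S, b j = 0)
    {u v : V → Fin (k+1)} (huv : ∀ j ∈ S, u j ≠ 0 ∧ v j ≠ 0 ∧ u j ≠ v j) :
    f a + f b ≤ f (S.piecewise u a) + f (S.piecewise v b) := by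
  induction S using Finset.induction_on generalizing b with
  | empty => simp
  | insert j S hj ih =>
    obtain ⟨hu, hv, huv'⟩ := huv j (Finset.mem_insert_self j S)
    have hbj : b j = 0 := hb j (Finset.mem_insert_self j S)
    have hzj : S.piecewise u b j = 0 := by rw [Finset.piecewise_eq_of_notMem _ _ _ hj, hbj]
    have hbz : kle b (S.piecewise u b) := by
      refine kle_iff_forall.mpr fun t => ?_
      by_cases ht : t ∈ S
      · exact Or.inl (hb t (Finset.mem_insert_of_mem ht))
      · simp [ht]
    have hab' : kle a (Function.update b j (v j)) := by
      refine kle_iff_forall.mpr fun t => ?_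
      by_cases ht : t = j
      · exact Or.inl (ht ▸ eq_zero_of_kle hab hbj)
      · simpa [ht] using kle_iff_forall.mp hab t
    have ih' := ih hab' (fun t ht => by
        rw [Function.update_of_ne (ne_of_mem_of_not_mem ht hj)]
        exact hb t (Finset.mem_insert_of_mem ht))
      (fun t ht => huv t (Finset.mem_insert_of_mem ht))
    -- `S.piecewise u b` is a common upper bound of `S.piecewise u a` and `b` vanishing at `j`
    have hua := hOS.marginal_le (kle_piecewise hab S u) hzj (u j)
    have hvb := hOS.marginal_le hbz hzj (v j)
    have hz := hPM (S.piecewise u b) j (u j) (v j) hzj hu hv huv'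
    rw [Finset.piecewise_insert, Finset.piecewise_insert,
      Finset.update_piecewise_of_notMem S v b hj]
    unfold marginal at hua hvb hz
    linarith

lemma PairwiseMonotone.add_le_piecewise_add_piecewise (hPM : PairwiseMonotone f)
    (hOS : OrthantSubmodular f) {a b c : V → Fin (k+1)} (hac : kle a c) (hbc : kle b c)
    (S : Finset V) (hc : ∀ j ∈ S, c j = 0) {u v : V → Fin (k+1)}
    (huv : ∀ j ∈ S, u j ≠ 0 ∧ v j ≠ 0 ∧ u j ≠ v j) :
    f a + f b ≤ f (S.piecewise u a) + f (S.piecewise v b) := by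
  have ha := hOS.piecewise_add_le hac S hc u
  have hb := hPM.add_le_piecewise_add_piecewise_of_kle hOS hbc S hc
    fun j hj => ⟨(huv j hj).2.1, (huv j hj).1, (huv j hj).2.2.symm⟩
  linarith

variable [Fintype V]

lemma OrthantSubmodular.vsup_add_vinf_le (hOS : OrthantSubmodular f) {x y : V → Fin (k+1)}
    (hxy : ∀ t, x t = 0 ∨ y t = 0 ∨ x t = y t) :
    f (vsup x y) + f (vinf x y) ≤ f x + f y := by
  set S := Finset.univ.filter fun t => x t = 0
  have hsup : S.piecewise y x = vsup x y := by
    funext t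
    by_cases hx : x t = 0
    · simp [S, vsup, hx]
    rcases hxy t with h | h | h <;> simp_all [S, vsup]
  have hinf : S.piecewise y (vinf x y) = y := by
    funext t
    by_cases hx : x t = 0
    · simp [S, hx]
    rcases hxy t with h | h | h <;> simp_all [S, vinf]
  have := hOS.piecewise_add_le (vinf_kle_left x y) S (fun t ht => by simpa [S] using ht) y
  rw [hsup, hinf] at this
  linarith

lemma KSubmodular.of_pairwiseMonotone_of_orthantSubmodular (hPM : PairwiseMonotone f)
    (hOS : OrthantSubmodular f) : KSubmodular f := by
  intro x y
  set D := Finset.univ.filter fun t => x t ≠ 0 ∧ y t ≠ 0 ∧ x t ≠ y t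
  have hD : ∀ t ∈ D, x t ≠ 0 ∧ y t ≠ 0 ∧ x t ≠ y t := fun t ht => (Finset.mem_filter.mp ht).2
  set x' := D.piecewise (0 : V → Fin (k+1)) x
  set y' := D.piecewise (0 : V → Fin (k+1)) y
  have hcompat : ∀ t, x' t = 0 ∨ y' t = 0 ∨ x' t = y' t := by
    intro t
    by_cases ht : t ∈ D
    · simp [x', ht]
    · simp only [x', y', Finset.piecewise_eq_of_notMem _ _ _ ht]
      simp only [D, Finset.mem_filter, Finset.mem_univ, true_and] at ht
      tauto
  have hsup : vsup x' y' = vsup x y := vsup_piecewise_zero hD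
  have hconflict := hPM.add_le_piecewise_add_piecewise hOS (hsup ▸ kle_vsup_left hcompat)
    (hsup ▸ kle_vsup_right hcompat) D
    (fun t ht => ksup_of_ne (hD t ht).1 (hD t ht).2.1 (hD t ht).2.2) hD
  simp only [x', y', Finset.piecewise_idem_right, Finset.piecewise_same] at hconflict
  have hcompatible := hOS.vsup_add_vinf_le hcompat
  rw [hsup, vinf_piecewise_zero hD] at hcompatible
  linarith

end Sufficiency

theorem ksubmodular_iff_general {k : ℕ} {V : Type*} [DecidableEq V]
    [Fintype V] (f : (V → Fin (k+1)) → ℝ) :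
    KSubmodular f ↔ PairwiseMonotone f ∧ OrthantSubmodular f :=
  ⟨fun h => ⟨h.pairwiseMonotone, h.orthantSubmodular⟩,
    fun h => .of_pairwiseMonotone_of_orthantSubmodular h.1 h.2⟩

theorem ksubmodular_iff {k : ℕ} (hk : 0 < k) {V : Type*} [DecidableEq V]
    [Fintype V] (f : (V → Fin (k+1)) → ℝ) :
    KSubmodular f ↔ PairwiseMonotone f ∧ OrthantSubmodular f :=
  ksubmodular_iff_general f
end

section
/- Let k ≥ 2 and f : (k+1)^V → ℝ be k-submodular. Then there exists a maximizer o of f with supp(o) = V, i.e., with every coordinate nonzero. -/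
lemma sup_inf_update {k : ℕ} {V : Type*} [DecidableEq V]
    (x : V → Fin (k+1)) (j : V) (i i' : Fin (k+1))
    (hx : x j = 0) (hi : i ≠ 0) (hi' : i' ≠ 0) (hne : i ≠ i') :
    vsup (Function.update x j i) (Function.update x j i') = x ∧
    vinf (Function.update x j i) (Function.update x j i') = x := by
  constructor <;> funext l <;> rcases eq_or_ne l j with h | h
  · subst h; simp [vsup, ksup, hx, hi, hi', hne]
  · simp [vsup, ksup, Function.update_of_ne h]
  · subst h; simp [vinf, kinf, hx, hi, hi', hne]
  · simp [vinf, kinf, Function.update_of_ne h]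

theorem exists_full_support_maximizer' {k : ℕ} (hk : 2 ≤ k) {V : Type*} [DecidableEq V]
    [Fintype V] [Nonempty V] (f : (V → Fin (k+1)) → ℝ) (hf : KSubmodular f) :
    ∃ o : V → Fin (k+1), (∀ x, f x ≤ f o) ∧ ∀ j, o j ≠ 0 := by
  have hv1 : ((1 : Fin (k+1)) : ℕ) = 1 := by
    have : ((1 : Fin (k+1)) : ℕ) = 1 % (k+1) := rfl
    rw [this, Nat.mod_eq_of_lt (by omega)]
  have hv2 : ((2 : Fin (k+1)) : ℕ) = 2 := by
    have : ((2 : Fin (k+1)) : ℕ) = 2 % (k+1) := rfl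
    rw [this, Nat.mod_eq_of_lt (by omega)]
  have h1 : (1 : Fin (k+1)) ≠ 0 := by
    intro h; rw [Fin.ext_iff, hv1] at h; simp at h
  have h2 : (2 : Fin (k+1)) ≠ 0 := by
    intro h; rw [Fin.ext_iff, hv2] at h; simp at h
  have h12 : (1 : Fin (k+1)) ≠ 2 := by
    intro h; rw [Fin.ext_iff, hv1, hv2] at h; omega
  -- set of maximizers
  obtain ⟨m, hm⟩ := Finite.exists_max f
  -- pick maximizer with fewest zeros
  let M := {o : V → Fin (k+1) // ∀ x, f x ≤ f o}
  have : Nonempty M := ⟨⟨m, hm⟩⟩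
  obtain ⟨o, ho⟩ := Finite.exists_min
    (fun o : M => (Finset.univ.filter (fun j => o.1 j = 0)).card)
  refine ⟨o.1, o.2, fun j hj => ?_⟩
  -- update o at j with 1 and 2
  obtain ⟨hsup, hinf⟩ := sup_inf_update o.1 j 1 2 hj h1 h2 h12
  have hsub := hf (Function.update o.1 j 1) (Function.update o.1 j 2)
  rw [hsup, hinf] at hsub
  have ha := o.2 (Function.update o.1 j 1)
  have hb := o.2 (Function.update o.1 j 2)
  have hmax1 : ∀ x, f x ≤ f (Function.update o.1 j 1) := by
    intro x
    have : f o.1 ≤ f (Function.update o.1 j 1) := by linarith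
    linarith [o.2 x]
  have hcard := ho ⟨Function.update o.1 j 1, hmax1⟩
  have hss : (Finset.univ.filter (fun l => Function.update o.1 j 1 l = 0)) ⊂
      (Finset.univ.filter (fun l => o.1 l = 0)) := by
    constructor
    · intro l hl
      simp only [Finset.mem_filter, Finset.mem_univ, true_and] at hl ⊢
      by_cases h : l = j
      · subst h; rw [Function.update_self] at hl; exact absurd hl h1
      · rwa [Function.update_of_ne h] at hl
    · intro hsub'
      have hjmem : j ∈ Finset.univ.filter (fun l => o.1 l = 0) := by
        simp [hj]
      have := hsub' hjmem
      simp only [Finset.mem_filter, Finset.mem_univ, true_and,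
        Function.update_self] at this
      exact h1 this
  have := Finset.card_lt_card hss
  simp only at hcard
  omega

/-- For `k ≥ 2`, every `k`-submodular function has a maximizer with full support. -/
theorem exists_full_support_maximizer {k : ℕ} (hk : 2 ≤ k) {V : Type*} [DecidableEq V]
    [Fintype V] [Nonempty V] (f : (V → Fin (k+1)) → ℝ) (hf : KSubmodular f) :
    ∃ o : V → Fin (k+1), (∀ x, f x ≤ f o) ∧ ∀ j, o j ≠ 0 :=
  exists_full_support_maximizer' hk f hf
end

section
/- Online gradient descent with learning rate η > 0 on a compact convex set K ⊆ ℝ^k of diameter D satisfies, against any sequence of linear loss vectors f_1,...,f_T, the regret bound Σ_t f_t·x_t − min_{x∈K} Σ_t f_t·x ≤ D²/η + η Σ_t ‖f_t‖². -/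
open RealInnerProductSpace in
lemma ogd_var_ineq {E : Type*} [NormedAddCommGroup E] [InnerProductSpace ℝ E]
    {K : Set E} (hK : Convex ℝ K) {p y : E} (hp : p ∈ K)
    (hmin : ∀ w ∈ K, ‖p - y‖ ≤ ‖w - y‖) {z : E} (hz : z ∈ K) :
    ⟪y - p, z - p⟫ ≤ 0 := by
  haveI : Nonempty ↑K := ⟨⟨p, hp⟩⟩
  have hm : ‖y - p‖ = ⨅ w : K, ‖y - w‖ := by
    apply le_antisymm
    · refine le_ciInf fun w => ?_
      rw [norm_sub_rev, norm_sub_rev y (w : E)]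
      exact hmin w w.2
    · have hb : BddBelow (Set.range fun w : K => ‖y - (w : E)‖) := by
        refine ⟨0, ?_⟩
        rintro a ⟨w, rfl⟩
        exact norm_nonneg _
      exact ciInf_le hb ⟨p, hp⟩
  exact (norm_eq_iInf_iff_real_inner_le_zero hK hp).mp hm z hz

open Finset RealInnerProductSpace in
/-- Regret bound of online gradient descent (Zinkevich). `x (t+1)` is the Euclidean
projection of `x t − η • f t` onto `K`. -/
theorem online_gradient_descent_regret (k : ℕ) (K : Set (EuclideanSpace ℝ (Fin k)))
    (hKne : K.Nonempty) (hKc : IsCompact K) (hKconv : Convex ℝ K)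
    (D : ℝ) (hD : ∀ p ∈ K, ∀ q ∈ K, ‖p - q‖ ≤ D)
    (η : ℝ) (hη : 0 < η)
    (T : ℕ) (f : ℕ → EuclideanSpace ℝ (Fin k)) (x : ℕ → EuclideanSpace ℝ (Fin k))
    (hx0 : x 0 ∈ K)
    (hproj : ∀ t, x (t+1) ∈ K ∧
      ∀ y ∈ K, ‖x (t+1) - (x t - η • f t)‖ ≤ ‖y - (x t - η • f t)‖) :
    ∀ z ∈ K,
      (∑ t ∈ range T, (⟪f t, x t⟫ - ⟪f t, z⟫))
        ≤ D ^ 2 / η + η * ∑ t ∈ range T, ‖f t‖ ^ 2 := by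
  intro z hz
  have key : ∀ t, 2 * η * (⟪f t, x t⟫ - ⟪f t, z⟫)
      ≤ ‖x t - z‖ ^ 2 - ‖x (t+1) - z‖ ^ 2 + η ^ 2 * ‖f t‖ ^ 2 := by
    intro t
    set y := x t - η • f t with hy
    have hmem := (hproj t).1
    have hvar : ⟪y - x (t+1), z - x (t+1)⟫ ≤ 0 :=
      ogd_var_ineq hKconv hmem (fun w hw => (hproj t).2 w hw) hz
    have e1 : ‖y - z‖ ^ 2
        = ‖y - x (t+1)‖ ^ 2 + 2 * ⟪y - x (t+1), x (t+1) - z⟫ + ‖x (t+1) - z‖ ^ 2 := by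
      rw [← sub_add_sub_cancel y (x (t+1)) z, norm_add_sq_real]
    have e1' : ⟪y - x (t+1), x (t+1) - z⟫ = - ⟪y - x (t+1), z - x (t+1)⟫ := by
      rw [← inner_neg_right, neg_sub]
    have e2 : ‖y - z‖ ^ 2
        = ‖x t - z‖ ^ 2 - 2 * (η * ⟪x t - z, f t⟫) + η ^ 2 * ‖f t‖ ^ 2 := by
      have : y - z = (x t - z) - η • f t := by rw [hy]; abel
      rw [this, norm_sub_sq_real, real_inner_smul_right, norm_smul, mul_pow]
      simp [sq_abs]
    have e3 : ⟪f t, x t⟫ - ⟪f t, z⟫ = ⟪x t - z, f t⟫ := by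
      rw [inner_sub_left, real_inner_comm (x t), real_inner_comm z]
    rw [e3]
    nlinarith [hvar, e1, e1', e2, sq_nonneg ‖y - x (t+1)‖]
  have hsum : ∀ n : ℕ, ∑ t ∈ range n, 2 * η * (⟪f t, x t⟫ - ⟪f t, z⟫)
      ≤ ‖x 0 - z‖ ^ 2 - ‖x n - z‖ ^ 2 + η ^ 2 * ∑ t ∈ range n, ‖f t‖ ^ 2 := by
    intro n
    induction n with
    | zero => simp
    | succ n ih =>
      rw [sum_range_succ, sum_range_succ, mul_add]
      have := key n
      linarith
  have hD0 : 0 ≤ D := le_trans (norm_nonneg _) (hD (x 0) hx0 z hz)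
  have hx0z : ‖x 0 - z‖ ^ 2 ≤ D ^ 2 := by
    have := hD (x 0) hx0 z hz
    nlinarith [norm_nonneg (x 0 - z)]
  have hF : (0:ℝ) ≤ ∑ t ∈ range T, ‖f t‖ ^ 2 :=
    Finset.sum_nonneg fun t _ => sq_nonneg _
  have h1 : 2 * η * ∑ t ∈ range T, (⟪f t, x t⟫ - ⟪f t, z⟫)
      ≤ D ^ 2 + η ^ 2 * ∑ t ∈ range T, ‖f t‖ ^ 2 := by
    rw [mul_sum]
    have := hsum T
    nlinarith [sq_nonneg ‖x T - z‖]
  have hgoal : (∑ t ∈ range T, (⟪f t, x t⟫ - ⟪f t, z⟫))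
      ≤ (D ^ 2 + η ^ 2 * ∑ t ∈ range T, ‖f t‖ ^ 2) / η := by
    rw [le_div_iff₀ hη]
    nlinarith [mul_nonneg (sq_nonneg η) hF, sq_nonneg D]
  have heq : (D ^ 2 + η ^ 2 * ∑ t ∈ range T, ‖f t‖ ^ 2) / η
      = D ^ 2 / η + η * ∑ t ∈ range T, ‖f t‖ ^ 2 := by
    field_simp
  linarith [hgoal, heq.le]
end

section
/- Let S ⊆ ℝ^k be a closed convex cone and K = S° ∩ B its polar cone intersected with the unit ball (K = {θ ∈ S° : ‖θ‖ ≤ 1}). Then for any point z ∈ ℝ^k, dist(z, S) = max_{θ ∈ K} θ·z, where dist is the Euclidean distance. -/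
open RealInnerProductSpace in
/-- Distance to a closed convex cone `S` equals the maximum of `⟪θ, z⟫` over the polar
cone intersected with the unit ball. -/
theorem dist_eq_max_over_polar (k : ℕ) (S : Set (EuclideanSpace ℝ (Fin k)))
    (hSne : S.Nonempty) (hSc : IsClosed S) (hSconv : Convex ℝ S)
    (hScone : ∀ (c : ℝ), 0 ≤ c → ∀ x ∈ S, c • x ∈ S)
    (z : EuclideanSpace ℝ (Fin k)) :
    IsGreatest {r : ℝ | ∃ θ : EuclideanSpace ℝ (Fin k),
        (∀ x ∈ S, ⟪θ, x⟫ ≤ 0) ∧ ‖θ‖ ≤ 1 ∧ r = ⟪θ, z⟫}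
      (Metric.infDist z S) := by
  -- projection of z onto S
  obtain ⟨p, hpS, hpmin⟩ := exists_norm_eq_iInf_of_complete_convex hSne
    (hSc.isComplete) hSconv z
  have hchar : ∀ w ∈ S, ⟪z - p, w - p⟫ ≤ 0 :=
    (norm_eq_iInf_iff_real_inner_le_zero hSconv hpS).mp hpmin
  -- 0 ∈ S
  obtain ⟨x₀, hx₀⟩ := hSne
  have h0 : (0 : EuclideanSpace ℝ (Fin k)) ∈ S := by
    simpa using hScone 0 le_rfl x₀ hx₀
  -- ⟪z - p, p⟫ = 0
  have hpp : ⟪z - p, p⟫ = 0 := by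
    have h1 : ⟪z - p, (0 : EuclideanSpace ℝ (Fin k)) - p⟫ ≤ 0 := hchar 0 h0
    have h2p : (2 : ℝ) • p ∈ S := hScone 2 (by norm_num) p hpS
    have h2 : ⟪z - p, (2 : ℝ) • p - p⟫ ≤ 0 := hchar _ h2p
    have e1 : ⟪z - p, (0 : EuclideanSpace ℝ (Fin k)) - p⟫ = -⟪z - p, p⟫ := by
      rw [zero_sub, inner_neg_right]
    have e2 : ((2 : ℝ) • p - p) = p := by
      rw [two_smul]; abel
    rw [e1] at h1
    rw [e2] at h2
    linarith
  -- polar property of z - p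
  have hpolar : ∀ x ∈ S, ⟪z - p, x⟫ ≤ 0 := by
    intro x hx
    have := hchar x hx
    rw [inner_sub_right, hpp] at this
    linarith
  -- infDist = ‖z - p‖
  have hmin : ∀ w ∈ S, ‖z - p‖ ≤ ‖z - w‖ := by
    intro w hw
    rw [hpmin]
    exact ciInf_le ⟨0, fun r ⟨w', hw'⟩ => hw' ▸ norm_nonneg _⟩ (⟨w, hw⟩ : S)
  have hdist : Metric.infDist z S = ‖z - p‖ := by
    apply le_antisymm
    · simpa [dist_eq_norm] using Metric.infDist_le_dist_of_mem hpS
    · have : Nonempty S := ⟨⟨x₀, hx₀⟩⟩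
      rw [Metric.infDist_eq_iInf]
      exact le_ciInf fun w => by simpa [dist_eq_norm] using hmin w w.2
  constructor
  · -- membership
    by_cases hzp : z = p
    · refine ⟨0, by simp, by simp, ?_⟩
      rw [hdist, hzp]; simp
    · have hn : ‖z - p‖ ≠ 0 := by
        simpa [sub_eq_zero] using hzp
      refine ⟨‖z - p‖⁻¹ • (z - p), ?_, ?_, ?_⟩
      · intro x hx
        rw [real_inner_smul_left]
        exact mul_nonpos_of_nonneg_of_nonpos (by positivity) (hpolar x hx)
      · rw [norm_smul]
        simp [hn]
      · rw [hdist, real_inner_smul_left]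
        have : ⟪z - p, z⟫ = ‖z - p‖ ^ 2 := by
          have : ⟪z - p, z⟫ = ⟪z - p, z - p⟫ + ⟪z - p, p⟫ := by
            rw [← inner_add_right]
            congr 1
            abel
          rw [this, hpp, real_inner_self_eq_norm_sq]; ring
        rw [this]
        field_simp
  · -- upper bound
    rintro r ⟨θ, hθS, hθn, rfl⟩
    have : ⟪θ, z⟫ = ⟪θ, z - p⟫ + ⟪θ, p⟫ := by
      rw [← inner_add_right]; congr 1; abel
    rw [this, hdist]
    have h1 : ⟪θ, p⟫ ≤ 0 := hθS p hpS
    have h2 : ⟪θ, z - p⟫ ≤ ‖z - p‖ := by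
      calc ⟪θ, z - p⟫ ≤ ‖θ‖ * ‖z - p‖ := real_inner_le_norm _ _
        _ ≤ 1 * ‖z - p‖ := by
            apply mul_le_mul_of_nonneg_right hθn (norm_nonneg _)
        _ = ‖z - p‖ := one_mul _
    linarith
end
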